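/- arXiv:2307.11271 — 4 statements merged into one kernel-verified Lean document; each statement's English description precedes it below -/
import Mathlib

section
/- Let ρ₀, ρ₁ be Hermitian matrices with trace 1, let 0 ≤ p ≤ 1, and let M₀, M₁ be Hermitian matrices with M₀ + M₁ = I. Define Err := p·Tr(ρ₀ M₁) + (1-p)·Tr(ρ₁ M₀), r := λ_max(M₀) - λ_min(M₀), and r' := λ_max(M₀) + λ_min(M₀). Then Err ≥ 1/2 - (1/2)‖p ρ₀ - (1-p) ρ₁‖₁ · r - (1/2)(2p-1)(r' - 1), where ‖·‖₁ is the trace norm. -/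
open Matrix BigOperators ComplexOrder

noncomputable def eigMax {d : ℕ} (M : Matrix (Fin d) (Fin d) ℂ) : ℝ :=
  if h : M.IsHermitian then ⨆ i, h.eigenvalues i else 0

noncomputable def eigMin {d : ℕ} (M : Matrix (Fin d) (Fin d) ℂ) : ℝ :=
  if h : M.IsHermitian then ⨅ i, h.eigenvalues i else 0

/-- Trace norm of a Hermitian matrix: sum of absolute values of eigenvalues. -/
noncomputable def traceNorm {d : ℕ} (M : Matrix (Fin d) (Fin d) ℂ) : ℝ :=
  if h : M.IsHermitian then ∑ i, |h.eigenvalues i| else 0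

/-- Real part of the trace. -/
noncomputable def reTr {d : ℕ} (M : Matrix (Fin d) (Fin d) ℂ) : ℝ := (M.trace).re

/-- Frobenius norm. -/
noncomputable def frob {d : ℕ} (M : Matrix (Fin d) (Fin d) ℂ) : ℝ :=
  Real.sqrt (∑ i, ∑ j, ‖M i j‖ ^ 2)

/-! With `X = p ρ₀ - (1 - p) ρ₁` one has `Err = p - Re Tr (X M₀)` and `Tr X = 2p - 1`.
Expanding `X` in an orthonormal eigenbasis `(λᵢ, uᵢ)` gives `Tr (X M₀) = ∑ λᵢ ⟪uᵢ, M₀ uᵢ⟫`, and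
every Rayleigh quotient `⟪uᵢ, M₀ uᵢ⟫` lies in `[λ_min, λ_max]`, i.e. within `r / 2` of `r' / 2`.
Hence `Re Tr (X M₀) ≤ (r / 2) ∑ |λᵢ| + (r' / 2) Tr X`. -/

lemma Finset.sum_mul_le_of_mem_Icc {ι : Type*} (s : Finset ι) (x y : ι → ℝ) {a b : ℝ}
    (hy : ∀ i ∈ s, y i ∈ Set.Icc a b) :
    ∑ i ∈ s, x i * y i ≤ (b - a) / 2 * ∑ i ∈ s, |x i| + (a + b) / 2 * ∑ i ∈ s, x i := by
  rw [Finset.mul_sum, Finset.mul_sum, ← Finset.sum_add_distrib]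
  refine Finset.sum_le_sum fun i hi => ?_
  have hdev : |y i - (a + b) / 2| ≤ (b - a) / 2 := by
    rw [abs_le]; constructor <;> linarith [(hy i hi).1, (hy i hi).2]
  calc x i * y i = x i * (y i - (a + b) / 2) + (a + b) / 2 * x i := by ring
    _ ≤ |x i| * |y i - (a + b) / 2| + (a + b) / 2 * x i := by
        rw [← abs_mul]; gcongr; exact le_abs_self _
    _ ≤ (b - a) / 2 * |x i| + (a + b) / 2 * x i := by
        rw [mul_comm ((b - a) / 2)]; gcongr

namespace Matrix
variable {𝕜 n : Type*} [RCLike 𝕜] [Fintype n] [DecidableEq n]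

lemma trace_eq_sum_dotProduct_mulVec (A : Matrix n n 𝕜)
    (b : OrthonormalBasis n 𝕜 (EuclideanSpace 𝕜 n)) :
    A.trace = ∑ i, star ⇑(b i) ⬝ᵥ A *ᵥ ⇑(b i) := by
  rw [← trace_toLin_eq A (PiLp.basisFun 2 𝕜 n), ← toLpLin_eq_toLin,
    LinearMap.trace_eq_sum_inner _ b]
  simp [EuclideanSpace.inner_eq_star_dotProduct, toLpLin_apply, dotProduct_comm]

lemma IsHermitian.trace_mul_eq_sum_eigenvalues_mul {A : Matrix n n 𝕜} (hA : A.IsHermitian) (B : Matrix n n 𝕜) :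
    (A * B).trace = ∑ i, (hA.eigenvalues i : 𝕜) *
      (star ⇑(hA.eigenvectorBasis i) ⬝ᵥ B *ᵥ ⇑(hA.eigenvectorBasis i)) := by
  rw [trace_mul_comm, trace_eq_sum_dotProduct_mulVec _ hA.eigenvectorBasis]
  refine Finset.sum_congr rfl fun i _ => ?_
  rw [← mulVec_mulVec, hA.mulVec_eigenvectorBasis, mulVec_smul, dotProduct_smul,
    RCLike.real_smul_eq_coe_mul]

open scoped MatrixOrder in
lemma IsHermitian.re_dotProduct_mulVec_le {A : Matrix n n 𝕜} (hA : A.IsHermitian) {b : ℝ}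
    (hb : ∀ i, hA.eigenvalues i ≤ b) (v : n → 𝕜) :
    RCLike.re (star v ⬝ᵥ A *ᵥ v) ≤ b * RCLike.re (star v ⬝ᵥ v) := by
  have hle : A ≤ algebraMap ℝ _ b := le_algebraMap_of_spectrum_le (by
    rw [hA.spectrum_real_eq_range_eigenvalues]; rintro _ ⟨i, rfl⟩; exact hb i) hA.isSelfAdjoint
  have := (le_iff.mp hle).re_dotProduct_nonneg v
  rw [Algebra.algebraMap_eq_smul_one, sub_mulVec, smul_mulVec, one_mulVec, dotProduct_sub,
    dotProduct_smul, map_sub, RCLike.smul_re] at this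
  linarith

open scoped MatrixOrder in
lemma IsHermitian.le_re_dotProduct_mulVec {A : Matrix n n 𝕜} (hA : A.IsHermitian) {a : ℝ}
    (ha : ∀ i, a ≤ hA.eigenvalues i) (v : n → 𝕜) :
    a * RCLike.re (star v ⬝ᵥ v) ≤ RCLike.re (star v ⬝ᵥ A *ᵥ v) := by
  have hle : algebraMap ℝ _ a ≤ A := algebraMap_le_of_le_spectrum (by
    rw [hA.spectrum_real_eq_range_eigenvalues]; rintro _ ⟨i, rfl⟩; exact ha i) hA.isSelfAdjoint
  have := (le_iff.mp hle).re_dotProduct_nonneg v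
  rw [Algebra.algebraMap_eq_smul_one, sub_mulVec, smul_mulVec, one_mulVec, dotProduct_sub,
    dotProduct_smul, map_sub, RCLike.smul_re] at this
  linarith

lemma IsHermitian.re_trace_mul_le {X M : Matrix n n 𝕜} (hX : X.IsHermitian) (hM : M.IsHermitian)
    {a b : ℝ} (ha : ∀ i, a ≤ hM.eigenvalues i) (hb : ∀ i, hM.eigenvalues i ≤ b) :
    RCLike.re (X * M).trace ≤
      (b - a) / 2 * ∑ i, |hX.eigenvalues i| + (a + b) / 2 * RCLike.re X.trace := by
  have hunit (i : n) :
      RCLike.re (star ⇑(hX.eigenvectorBasis i) ⬝ᵥ ⇑(hX.eigenvectorBasis i)) = 1 := by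
    rw [dotProduct_comm, ← EuclideanSpace.inner_eq_star_dotProduct, inner_self_eq_norm_sq_to_K,
      hX.eigenvectorBasis.orthonormal.1 i]
    simp
  rw [hX.trace_mul_eq_sum_eigenvalues_mul, hX.trace_eq_sum_eigenvalues, map_sum, map_sum]
  simp only [RCLike.re_ofReal_mul, RCLike.ofReal_re]
  refine Finset.sum_mul_le_of_mem_Icc _ _ _ fun i _ => ⟨?_, ?_⟩
  · simpa [hunit] using hM.le_re_dotProduct_mulVec ha (hX.eigenvectorBasis i)
  · simpa [hunit] using hM.re_dotProduct_mulVec_le hb (hX.eigenvectorBasis i)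

end Matrix

theorem stmt2_general {d : ℕ} (p : ℝ)
    (ρ₀ ρ₁ M₀ M₁ : Matrix (Fin d) (Fin d) ℂ)
    (hρ₀ : ρ₀.IsHermitian) (hρ₁ : ρ₁.IsHermitian)
    (htr₀ : ρ₀.trace = 1) (htr₁ : ρ₁.trace = 1)
    (hM₀ : M₀.IsHermitian) (hsum : M₀ + M₁ = 1) :
    p * reTr (ρ₀ * M₁) + (1 - p) * reTr (ρ₁ * M₀) ≥
      1 / 2 - (1 / 2) * traceNorm (p • ρ₀ - (1 - p) • ρ₁) * (eigMax M₀ - eigMin M₀)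
        - (1 / 2) * (2 * p - 1) * ((eigMax M₀ + eigMin M₀) - 1) := by
  set X := p • ρ₀ - (1 - p) • ρ₁
  have hX : X.IsHermitian := (hρ₀.smul (IsSelfAdjoint.all p)).sub (hρ₁.smul (IsSelfAdjoint.all _))
  have htrX : RCLike.re X.trace = 2 * p - 1 := by
    simp only [X, trace_sub, trace_smul, htr₀, htr₁, Complex.real_smul, RCLike.re_to_complex,
      Complex.sub_re, Complex.re_ofReal_mul, Complex.one_re]
    ring
  obtain rfl : M₁ = 1 - M₀ := eq_sub_of_add_eq' hsum
  have hErr : p * reTr (ρ₀ * (1 - M₀)) + (1 - p) * reTr (ρ₁ * M₀) =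
      p - RCLike.re (X * M₀).trace := by
    simp only [reTr, X, mul_sub, sub_mul, mul_one, smul_mul_assoc, trace_sub, trace_smul, htr₀,
      Complex.real_smul, RCLike.re_to_complex, Complex.sub_re, Complex.re_ofReal_mul, Complex.one_re]
    ring
  have hbound := hX.re_trace_mul_le hM₀ (fun i => ciInf_le (Set.finite_range _).bddBelow i)
    (fun i => le_ciSup (Set.finite_range _).bddAbove i)
  rw [htrX] at hbound
  simp only [traceNorm, eigMax, eigMin, dif_pos hX, dif_pos hM₀, hErr]
  linarith

/-- General lower bound on the discrimination error. -/
theorem stmt2 {d : ℕ} (p : ℝ) (hp0 : 0 ≤ p) (hp1 : p ≤ 1)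
    (ρ₀ ρ₁ M₀ M₁ : Matrix (Fin d) (Fin d) ℂ)
    (hρ₀ : ρ₀.IsHermitian) (hρ₁ : ρ₁.IsHermitian)
    (htr₀ : ρ₀.trace = 1) (htr₁ : ρ₁.trace = 1)
    (hM₀ : M₀.IsHermitian) (hM₁ : M₁.IsHermitian) (hsum : M₀ + M₁ = 1) :
    p * reTr (ρ₀ * M₁) + (1 - p) * reTr (ρ₁ * M₀) ≥
      1 / 2 - (1 / 2) * traceNorm (p • ρ₀ - (1 - p) • ρ₁) * (eigMax M₀ - eigMin M₀)
        - (1 / 2) * (2 * p - 1) * ((eigMax M₀ + eigMin M₀) - 1) :=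
  stmt2_general p ρ₀ ρ₁ M₀ M₁ hρ₀ hρ₁ htr₀ htr₁ hM₀ hsum
end

section
/- Let ρ₀, ρ₁ be Hermitian matrices with trace 1 and let M₀, M₁ be Hermitian matrices with M₀ + M₁ = I. Then (1/2)Tr(ρ₀ M₁) + (1/2)Tr(ρ₁ M₀) ≥ 1/2 - (1/2)‖(1/2)ρ₀ - (1/2)ρ₁‖₁ · (λ_max(M₀) - λ_min(M₀)). -/
/-!
With `Δ = ρ₀/2 - ρ₁/2` the error probability equals `1/2 - Re Tr(Δ M₀)`. In eigenbases `uᵢ` of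
`Δ` and `vⱼ` of `M₀`, `Re Tr(Δ M₀) = ∑ᵢⱼ λᵢ μⱼ |⟨uᵢ, vⱼ⟩|²`, and the weights `|⟨uᵢ, vⱼ⟩|²` sum
to `1` over `j`. Because `∑ᵢ λᵢ = Tr Δ = 0`, each `μⱼ` may be replaced by `μⱼ - c` with `c` the
midpoint of the spectrum of `M₀`; then `|μⱼ - c| ≤ (λ_max - λ_min)/2` bounds the sum by
`‖Δ‖₁ (λ_max - λ_min)/2`.
-/

open Matrix BigOperators ComplexOrder

namespace Matrix

variable {𝕜 : Type*} [RCLike 𝕜] {n : Type*} [Fintype n] [DecidableEq n]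

theorem sum_norm_sq_row_of_mem_unitaryGroup {U : Matrix n n 𝕜}
    (hU : U ∈ unitaryGroup n 𝕜) (i : n) : ∑ j, ‖U i j‖ ^ 2 = 1 := by
  have h := congrFun (congrFun (mem_unitaryGroup_iff.mp hU) i) i
  simp only [mul_apply, star_apply, ← starRingEnd_apply, RCLike.mul_conj, one_apply_eq] at h
  exact_mod_cast h

namespace IsHermitian

variable {A B : Matrix n n 𝕜}

noncomputable def overlap (hA : A.IsHermitian) (hB : B.IsHermitian) : n → n → ℝ :=
  fun i j ↦ ‖(star (hA.eigenvectorUnitary : Matrix n n 𝕜) * hB.eigenvectorUnitary) i j‖ ^ 2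

theorem sum_overlap_row (hA : A.IsHermitian) (hB : B.IsHermitian) (i : n) :
    ∑ j, hA.overlap hB i j = 1 :=
  sum_norm_sq_row_of_mem_unitaryGroup
    (star hA.eigenvectorUnitary * hB.eigenvectorUnitary).2 i

theorem trace_mul_eq_sum_overlap (hA : A.IsHermitian) (hB : B.IsHermitian) :
    (A * B).trace =
      ∑ i, ∑ j, ((hA.eigenvalues i * hB.eigenvalues j * hA.overlap hB i j : ℝ) : 𝕜) := by
  set U : Matrix n n 𝕜 := ↑hA.eigenvectorUnitary
  set V : Matrix n n 𝕜 := ↑hB.eigenvectorUnitary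
  set D : Matrix n n 𝕜 := diagonal (RCLike.ofReal ∘ hA.eigenvalues)
  set E : Matrix n n 𝕜 := diagonal (RCLike.ofReal ∘ hB.eigenvalues)
  have hcycle : (A * B).trace = (D * (star U * V) * E * star (star U * V)).trace := by
    conv_lhs => rw [hA.spectral_theorem, hB.spectral_theorem]
    rw [star_mul, star_star,
      show D * (star U * V) * E * (star V * U) = D * star U * V * E * star V * U by
        simp only [Matrix.mul_assoc],
      trace_mul_comm _ U]
    simp only [Unitary.conjStarAlgAut_apply, Matrix.mul_assoc]
    rfl
  rw [hcycle, trace]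
  refine Finset.sum_congr rfl fun i _ ↦ ?_
  rw [diag_apply, mul_apply]
  refine Finset.sum_congr rfl fun j _ ↦ ?_
  simp only [mul_diagonal, diagonal_mul, star_apply, D, E, Function.comp_apply, overlap]
  rw [← starRingEnd_apply, RCLike.ofReal_mul, RCLike.ofReal_mul, RCLike.ofReal_pow,
    ← RCLike.mul_conj]
  ring

end IsHermitian

end Matrix

theorem sum_sum_mul_mul_le_of_sum_eq_zero {ι κ : Type*} [Fintype ι] [Fintype κ]
    {a : ι → ℝ} {b : κ → ℝ} {p : ι → κ → ℝ} {m M : ℝ} (ha : ∑ i, a i = 0)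
    (hb : ∀ j, b j ∈ Set.Icc m M) (hp : ∀ i j, 0 ≤ p i j) (hrow : ∀ i, ∑ j, p i j = 1) :
    ∑ i, ∑ j, a i * b j * p i j ≤ (∑ i, |a i|) * ((M - m) / 2) := by
  set c := (M + m) / 2 with hc
  have hdev : ∀ j, |b j - c| ≤ (M - m) / 2 := fun j ↦ by
    rw [abs_le]; constructor <;> linarith [(hb j).1, (hb j).2]
  calc ∑ i, ∑ j, a i * b j * p i j = ∑ i, ∑ j, a i * (b j - c) * p i j := by
        simp only [mul_sub, sub_mul, Finset.sum_sub_distrib, mul_assoc, ← Finset.mul_sum, hrow,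
          mul_one, ← Finset.sum_mul, ha, zero_mul, sub_zero]
    _ ≤ ∑ i, ∑ j, |a i| * ((M - m) / 2) * p i j := by
        refine Finset.sum_le_sum fun i _ ↦ Finset.sum_le_sum fun j _ ↦
          mul_le_mul_of_nonneg_right ?_ (hp i j)
        calc a i * (b j - c) ≤ |a i| * |b j - c| := (le_abs_self _).trans (abs_mul _ _).le
          _ ≤ |a i| * ((M - m) / 2) := by gcongr; exact hdev j
    _ = (∑ i, |a i|) * ((M - m) / 2) := by
        simp only [← Finset.mul_sum, hrow, mul_one, Finset.sum_mul]

theorem eigMin_le_eigenvalues {d : ℕ} {M : Matrix (Fin d) (Fin d) ℂ} (hM : M.IsHermitian)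
    (j : Fin d) : eigMin M ≤ hM.eigenvalues j := by
  rw [eigMin, dif_pos hM]
  exact ciInf_le (Set.finite_range _).bddBelow j

theorem eigenvalues_le_eigMax {d : ℕ} {M : Matrix (Fin d) (Fin d) ℂ} (hM : M.IsHermitian)
    (j : Fin d) : hM.eigenvalues j ≤ eigMax M := by
  rw [eigMax, dif_pos hM]
  exact le_ciSup (Set.finite_range _).bddAbove j

theorem reTr_mul_le_of_trace_eq_zero {d : ℕ} {A B : Matrix (Fin d) (Fin d) ℂ}
    (hA : A.IsHermitian) (hB : B.IsHermitian) (hA₀ : A.trace = 0) :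
    reTr (A * B) ≤ traceNorm A * ((eigMax B - eigMin B) / 2) := by
  have hsum : ∑ i, hA.eigenvalues i = 0 := (RCLike.ofReal_eq_zero (K := ℂ)).mp <| by
    rw [RCLike.ofReal_sum, ← hA.trace_eq_sum_eigenvalues, hA₀]
  have hre := congrArg RCLike.re (hA.trace_mul_eq_sum_overlap hB)
  simp only [← RCLike.ofReal_sum, RCLike.ofReal_re] at hre
  rw [traceNorm, dif_pos hA]
  exact hre.trans_le <| sum_sum_mul_mul_le_of_sum_eq_zero hsum
    (fun j ↦ ⟨eigMin_le_eigenvalues hB j, eigenvalues_le_eigMax hB j⟩)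
    (fun i j ↦ sq_nonneg _) (hA.sum_overlap_row hB)

theorem stmt3_general {d : ℕ} (ρ₀ ρ₁ M₀ M₁ : Matrix (Fin d) (Fin d) ℂ)
    (hρ₀ : ρ₀.IsHermitian) (hρ₁ : ρ₁.IsHermitian)
    (htr₀ : ρ₀.trace = 1) (htr₁ : ρ₁.trace = 1)
    (hM₀ : M₀.IsHermitian) (hsum : M₀ + M₁ = 1) :
    (1 / 2) * reTr (ρ₀ * M₁) + (1 / 2) * reTr (ρ₁ * M₀) ≥
      1 / 2 - (1 / 2) * traceNorm ((1 / 2 : ℝ) • ρ₀ - (1 / 2 : ℝ) • ρ₁)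
        * (eigMax M₀ - eigMin M₀) := by
  set Δ := (1 / 2 : ℝ) • ρ₀ - (1 / 2 : ℝ) • ρ₁
  have hΔ : Δ.IsHermitian :=
    (hρ₀.smul (IsSelfAdjoint.all _)).sub (hρ₁.smul (IsSelfAdjoint.all _))
  have hΔ₀ : Δ.trace = 0 := by simp [Δ, trace_sub, trace_smul, htr₀, htr₁]
  have hρ₀M₁ : reTr (ρ₀ * M₁) = 1 - reTr (ρ₀ * M₀) := by
    simp [reTr, eq_sub_of_add_eq' hsum, Matrix.mul_sub, htr₀]
  have hΔM₀ : reTr (Δ * M₀) = (reTr (ρ₀ * M₀) - reTr (ρ₁ * M₀)) / 2 := by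
    simp only [reTr, Δ, sub_mul, smul_mul, trace_sub, trace_smul, Complex.real_smul,
      Complex.sub_re, Complex.re_ofReal_mul]
    ring
  have := reTr_mul_le_of_trace_eq_zero hΔ hM₀ hΔ₀
  rw [ge_iff_le, hρ₀M₁]
  linarith

/-- The `p = 1/2` case of the discrimination error bound. -/
theorem stmt3 {d : ℕ} (ρ₀ ρ₁ M₀ M₁ : Matrix (Fin d) (Fin d) ℂ)
    (hρ₀ : ρ₀.IsHermitian) (hρ₁ : ρ₁.IsHermitian)
    (htr₀ : ρ₀.trace = 1) (htr₁ : ρ₁.trace = 1)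
    (hM₀ : M₀.IsHermitian) (hM₁ : M₁.IsHermitian) (hsum : M₀ + M₁ = 1) :
    (1 / 2) * reTr (ρ₀ * M₁) + (1 / 2) * reTr (ρ₁ * M₀) ≥
      1 / 2 - (1 / 2) * traceNorm ((1 / 2 : ℝ) • ρ₀ - (1 / 2 : ℝ) • ρ₁)
        * (eigMax M₀ - eigMin M₀) :=
  stmt3_general ρ₀ ρ₁ M₀ M₁ hρ₀ hρ₁ htr₀ htr₁ hM₀ hsum
end

section
/- Let M₀, M₁ be Hermitian d×d matrices with M₀ + M₁ = I, and suppose λ_max(M₀) - λ_min(M₀) > 1. Let x₀ be an interior point of any convex cone C of Hermitian matrices (so there is ε > 0 with the ε-ball around x₀ in Frobenius norm contained in C), and assume Tr x₀ > 0. Then there exist ρ₀, ρ₁ ∈ C with Tr ρ₀ = Tr ρ₁ = 1 such that (1/2)Tr(ρ₀ M₁) + (1/2)Tr(ρ₁ M₀) < 1/2 - (1/2)‖(1/2)ρ₀ - (1/2)ρ₁‖₁. -/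
open Matrix BigOperators ComplexOrder

/-! Perturb the interior point `x₀` in the traceless direction `E₁ - E_d` (difference of the
eigenprojections of `M₀` for its extreme eigenvalues) and normalise: the two states differ by
`c • (E₁ - E_d)` for some `c > 0`. Their trace distance is then at most `c`, while
`Tr (ρ₀ M₀) - Tr (ρ₁ M₀) = c (λ_max - λ_min) > c`. -/

namespace Matrix

variable {𝕜 n ι : Type*} [RCLike 𝕜] [Fintype n] [Fintype ι]

lemma sum_star_dotProduct_mulVec_eq_trace [DecidableEq n] (A : Matrix n n 𝕜)
    (b : OrthonormalBasis ι 𝕜 (EuclideanSpace 𝕜 n)) :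
    ∑ i, star ⇑(b i) ⬝ᵥ (A *ᵥ ⇑(b i)) = A.trace := by
  have htrace : LinearMap.trace 𝕜 _ (toLpLin 2 2 A) = A.trace := by
    rw [toLpLin_eq_toLin, LinearMap.trace_eq_matrix_trace _ (PiLp.basisFun 2 𝕜 n),
      LinearMap.toMatrix_toLin]
  rw [← htrace, LinearMap.trace_eq_sum_inner _ b]
  refine Finset.sum_congr rfl fun i _ => ?_
  rw [EuclideanSpace.inner_eq_star_dotProduct, dotProduct_comm]
  rfl

lemma trace_vecMulVec_star_of_norm_eq_one {v : EuclideanSpace 𝕜 n} (hv : ‖v‖ = 1) :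
    (vecMulVec ⇑v (star ⇑v)).trace = 1 := by
  rw [trace_vecMulVec, ← EuclideanSpace.inner_eq_star_dotProduct, inner_self_eq_norm_sq_to_K, hv]
  simp

lemma trace_vecMulVec_star_mul (v : n → 𝕜) (M : Matrix n n 𝕜) :
    (vecMulVec v (star v) * M).trace = star v ⬝ᵥ (M *ᵥ v) := by
  rw [vecMulVec_mul, trace_vecMulVec, dotProduct_comm, dotProduct_mulVec]

namespace IsHermitian

variable [DecidableEq n] {M : Matrix n n 𝕜}

noncomputable def eigenprojection (hM : M.IsHermitian) (i : n) : Matrix n n 𝕜 :=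
  vecMulVec ⇑(hM.eigenvectorBasis i) (star ⇑(hM.eigenvectorBasis i))

lemma posSemidef_eigenprojection (hM : M.IsHermitian) (i : n) :
    (hM.eigenprojection i).PosSemidef :=
  posSemidef_vecMulVec_self_star _

lemma trace_eigenprojection (hM : M.IsHermitian) (i : n) :
    (hM.eigenprojection i).trace = 1 :=
  trace_vecMulVec_star_of_norm_eq_one (hM.eigenvectorBasis.orthonormal.1 i)

lemma re_trace_eigenprojection_mul (hM : M.IsHermitian) (i : n) :
    RCLike.re (hM.eigenprojection i * M).trace = hM.eigenvalues i := by
  rw [eigenprojection, trace_vecMulVec_star_mul, hM.eigenvalues_eq]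

lemma re_trace_smul_eigenprojection_sub_mul (hM : M.IsHermitian) (c : ℝ) (i j : n) :
    RCLike.re ((c • (hM.eigenprojection i - hM.eigenprojection j)) * M).trace
      = c * (hM.eigenvalues i - hM.eigenvalues j) := by
  rw [smul_mul_assoc, trace_smul, sub_mul, trace_sub, RCLike.smul_re, map_sub,
    re_trace_eigenprojection_mul, re_trace_eigenprojection_mul]

end IsHermitian

lemma IsHermitian.ofReal_re_trace {A : Matrix n n 𝕜} (hA : A.IsHermitian) :
    ((RCLike.re A.trace : ℝ) : 𝕜) = A.trace := by
  rw [← RCLike.conj_eq_iff_re, ← RCLike.star_def, ← trace_conjTranspose, hA.eq]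

end Matrix

lemma traceNorm_sub_le {d : ℕ} {A B : Matrix (Fin d) (Fin d) ℂ} (hA : A.PosSemidef)
    (hB : B.PosSemidef) : traceNorm (A - B) ≤ reTr A + reTr B := by
  have hH : (A - B).IsHermitian := hA.isHermitian.sub hB.isHermitian
  set w := hH.eigenvectorBasis
  set a : Fin d → ℝ := fun i => (star ⇑(w i) ⬝ᵥ (A *ᵥ ⇑(w i))).re
  set b : Fin d → ℝ := fun i => (star ⇑(w i) ⬝ᵥ (B *ᵥ ⇑(w i))).re
  have ha : ∀ i, 0 ≤ a i := fun i => (Complex.nonneg_iff.1 (hA.dotProduct_mulVec_nonneg _)).1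
  have hb : ∀ i, 0 ≤ b i := fun i => (Complex.nonneg_iff.1 (hB.dotProduct_mulVec_nonneg _)).1
  have heig : ∀ i, hH.eigenvalues i = a i - b i := fun i => by
    rw [hH.eigenvalues_eq, sub_mulVec, dotProduct_sub, map_sub]
    rfl
  rw [traceNorm, dif_pos hH]
  calc ∑ i, |hH.eigenvalues i| ≤ ∑ i, (a i + b i) := Finset.sum_le_sum fun i _ => by
        rw [heig, abs_le]; constructor <;> linarith [ha i, hb i]
    _ = reTr A + reTr B := by
        simp only [Finset.sum_add_distrib, a, b, ← Complex.re_sum,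
          sum_star_dotProduct_mulVec_eq_trace, reTr]

lemma Matrix.IsHermitian.traceNorm_smul_eigenprojection_sub_le {d : ℕ}
    {M : Matrix (Fin d) (Fin d) ℂ} (hM : M.IsHermitian) {c : ℝ} (hc : 0 ≤ c) (i j : Fin d) :
    traceNorm (c • (hM.eigenprojection i - hM.eigenprojection j)) ≤ 2 * c := by
  rw [smul_sub]
  calc _ ≤ reTr (c • hM.eigenprojection i) + reTr (c • hM.eigenprojection j) :=
        traceNorm_sub_le ((hM.posSemidef_eigenprojection i).smul hc)
          ((hM.posSemidef_eigenprojection j).smul hc)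
    _ = 2 * c := by
        simp only [reTr, trace_smul, hM.trace_eigenprojection, Complex.real_smul, mul_one,
          Complex.ofReal_re]
        ring

lemma frob_smul {d : ℕ} (r : ℝ) (M : Matrix (Fin d) (Fin d) ℂ) :
    frob (r • M) = |r| * frob M := by
  have hsq : ∑ i, ∑ j, ‖(r • M) i j‖ ^ 2 = r ^ 2 * ∑ i, ∑ j, ‖M i j‖ ^ 2 := by
    simp only [Finset.mul_sum, Matrix.smul_apply, norm_smul, mul_pow, Real.norm_eq_abs, sq_abs]
  rw [frob, frob, hsq, Real.sqrt_mul (sq_nonneg r), Real.sqrt_sq_eq_abs]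

lemma Matrix.IsHermitian.exists_eigenvalues_sub_eq {d : ℕ} {M : Matrix (Fin d) (Fin d) ℂ}
    (hM : M.IsHermitian) (h : eigMin M < eigMax M) :
    ∃ i j, hM.eigenvalues i - hM.eigenvalues j = eigMax M - eigMin M := by
  have : Nonempty (Fin d) := by
    by_contra hempty
    rw [not_nonempty_iff] at hempty
    simp [eigMax, eigMin, hM] at h
  obtain ⟨i, hi⟩ := exists_eq_ciSup_of_finite (f := hM.eigenvalues)
  obtain ⟨j, hj⟩ := exists_eq_ciInf_of_finite (f := hM.eigenvalues)
  exact ⟨i, j, by rw [eigMax, eigMin, dif_pos hM, dif_pos hM, hi, hj]⟩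

lemma exists_trace_one_mem_sub_eq_smul {d : ℕ} {C : Set (Matrix (Fin d) (Fin d) ℂ)}
    (hCcone : ∀ r : ℝ, 0 ≤ r → ∀ x ∈ C, r • x ∈ C)
    {x₀ : Matrix (Fin d) (Fin d) ℂ} (hx₀ : x₀.IsHermitian) {ε : ℝ} (hε : 0 < ε)
    (hball : ∀ y : Matrix (Fin d) (Fin d) ℂ, y.IsHermitian → frob (y - x₀) ≤ ε → y ∈ C)
    (htr : 0 < reTr x₀) {N : Matrix (Fin d) (Fin d) ℂ} (hN : N.IsHermitian)
    (hNtr : N.trace = 0) :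
    ∃ ρ₀ ∈ C, ∃ ρ₁ ∈ C, ρ₀.trace = 1 ∧ ρ₁.trace = 1 ∧ ∃ c : ℝ, 0 < c ∧ ρ₀ - ρ₁ = c • N := by
  set T := reTr x₀
  have hfrob : 0 ≤ frob N := Real.sqrt_nonneg _
  set δ := ε / (frob N + 1)
  have hδ : 0 < δ := div_pos hε (by linarith)
  have hδfrob : δ * frob N ≤ ε := by
    have : δ * (frob N + 1) = ε := div_mul_cancel₀ ε (by linarith)
    linarith
  have hmem : ∀ s : ℝ, |s| = δ → T⁻¹ • (x₀ + s • N) ∈ C := fun s hs => by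
    refine hCcone _ (inv_nonneg.2 htr.le) _ (hball _ (hx₀.add (hN.smul (.all s))) ?_)
    rwa [add_sub_cancel_left, frob_smul, hs]
  have htrace : ∀ s : ℝ, (T⁻¹ • (x₀ + s • N)).trace = 1 := fun s => by
    rw [trace_smul, trace_add, trace_smul, hNtr, smul_zero, add_zero, ← hx₀.ofReal_re_trace,
      Complex.real_smul]
    change ((T⁻¹ : ℝ) : ℂ) * (T : ℂ) = 1
    rw [← Complex.ofReal_mul, inv_mul_cancel₀ htr.ne', Complex.ofReal_one]
  refine ⟨_, hmem δ (abs_of_pos hδ), _, hmem (-δ) (by rw [abs_neg, abs_of_pos hδ]),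
    htrace _, htrace _, 2 * δ / T, by positivity, ?_⟩
  rw [← smul_sub, add_sub_add_left_eq_sub, ← sub_smul, smul_smul]
  congr 1
  ring

theorem stmt9_general {d : ℕ} (M₀ M₁ : Matrix (Fin d) (Fin d) ℂ)
    (hM₀ : M₀.IsHermitian) (hsum : M₀ + M₁ = 1)
    (hr : eigMax M₀ - eigMin M₀ > 1)
    (C : Set (Matrix (Fin d) (Fin d) ℂ))
    (hCcone : ∀ (r : ℝ), 0 ≤ r → ∀ x ∈ C, r • x ∈ C)
    (x₀ : Matrix (Fin d) (Fin d) ℂ) (hx₀ : x₀.IsHermitian)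
    (ε : ℝ) (hε : 0 < ε)
    (hball : ∀ y : Matrix (Fin d) (Fin d) ℂ, y.IsHermitian →
      frob (y - x₀) ≤ ε → y ∈ C)
    (htr : 0 < reTr x₀) :
    ∃ ρ₀ ∈ C, ∃ ρ₁ ∈ C, ρ₀.trace = 1 ∧ ρ₁.trace = 1 ∧
      (1 / 2) * reTr (ρ₀ * M₁) + (1 / 2) * reTr (ρ₁ * M₀) <
        1 / 2 - (1 / 2) * traceNorm ((1 / 2 : ℝ) • ρ₀ - (1 / 2 : ℝ) • ρ₁) := by
  obtain ⟨i, j, hij⟩ := hM₀.exists_eigenvalues_sub_eq (by linarith)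
  obtain ⟨ρ₀, hρ₀, ρ₁, hρ₁, htr₀, htr₁, c, hc, hρ⟩ := exists_trace_one_mem_sub_eq_smul hCcone hx₀
    hε hball htr ((hM₀.posSemidef_eigenprojection i).isHermitian.sub
      (hM₀.posSemidef_eigenprojection j).isHermitian)
    (by rw [trace_sub, hM₀.trace_eigenprojection, hM₀.trace_eigenprojection, sub_self])
  refine ⟨ρ₀, hρ₀, ρ₁, hρ₁, htr₀, htr₁, ?_⟩
  have hnorm : traceNorm ((1 / 2 : ℝ) • ρ₀ - (1 / 2 : ℝ) • ρ₁) ≤ c := by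
    rw [← smul_sub, hρ, smul_smul]
    linarith [hM₀.traceNorm_smul_eigenprojection_sub_le (c := 1 / 2 * c) (by positivity) i j]
  have hgap : reTr (ρ₀ * M₀) - reTr (ρ₁ * M₀) = c * (eigMax M₀ - eigMin M₀) := by
    rw [← hij, ← hM₀.re_trace_smul_eigenprojection_sub_mul, ← hρ, sub_mul, trace_sub, map_sub]
    rfl
  have hM₁ : reTr (ρ₀ * M₁) = 1 - reTr (ρ₀ * M₀) := by
    rw [eq_sub_of_add_eq' hsum, mul_sub, mul_one, reTr, reTr, trace_sub, htr₀, Complex.sub_re,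
      Complex.one_re]
  linarith [lt_mul_of_one_lt_right hc hr]

/-- If `M₀ + M₁ = I` with `λ_max(M₀) - λ_min(M₀) > 1`, and `x₀` is
an interior point (Frobenius `ε`-ball of Hermitian matrices around `x₀`
contained in the convex cone `C`) with `Tr x₀ > 0`, then some trace-one
`ρ₀, ρ₁ ∈ C` violate the quantum state-discrimination bound. -/
theorem stmt9 {d : ℕ} (M₀ M₁ : Matrix (Fin d) (Fin d) ℂ)
    (hM₀ : M₀.IsHermitian) (hM₁ : M₁.IsHermitian) (hsum : M₀ + M₁ = 1)
    (hr : eigMax M₀ - eigMin M₀ > 1)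
    (C : Set (Matrix (Fin d) (Fin d) ℂ)) (hCconv : Convex ℝ C)
    (hCcone : ∀ (r : ℝ), 0 ≤ r → ∀ x ∈ C, r • x ∈ C)
    (x₀ : Matrix (Fin d) (Fin d) ℂ) (hx₀ : x₀.IsHermitian) (hx₀C : x₀ ∈ C)
    (ε : ℝ) (hε : 0 < ε)
    (hball : ∀ y : Matrix (Fin d) (Fin d) ℂ, y.IsHermitian →
      frob (y - x₀) ≤ ε → y ∈ C)
    (htr : 0 < reTr x₀) :
    ∃ ρ₀ ∈ C, ∃ ρ₁ ∈ C, ρ₀.trace = 1 ∧ ρ₁.trace = 1 ∧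
      (1 / 2) * reTr (ρ₀ * M₁) + (1 / 2) * reTr (ρ₁ * M₀) <
        1 / 2 - (1 / 2) * traceNorm ((1 / 2 : ℝ) • ρ₀ - (1 / 2 : ℝ) • ρ₁) :=
  stmt9_general M₀ M₁ hM₀ hsum hr C hCcone x₀ hx₀ ε hε hball htr
end

section
/- For the 4×4 matrices ρ₀ = (1/8)·[[2,0,0,0],[0,2,1,0],[0,1,2,0],[0,0,0,2]], ρ₁ = I/4, M₀ = the permutation matrix swapping the two middle basis vectors (i.e., [[1,0,0,0],[0,0,1,0],[0,1,0,0],[0,0,0,1]]), and M₁ = I − M₀, one has: (1/2)Tr(ρ₀M₁)+(1/2)Tr(ρ₁M₀) = 3/8, ‖(1/2)ρ₀ − (1/2)ρ₁‖₁ = 1/8, and λ_max(M₀) − λ_min(M₀) = 2; in particular equality 3/8 = 1/2 − (1/2)(1/8)(2) holds in the generalized state-discrimination bound, and 3/8 < 1/2 − (1/2)(1/8), violating the quantum trace-norm bound. -/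
open Matrix BigOperators ComplexOrder

noncomputable def ρ₀ex : Matrix (Fin 4) (Fin 4) ℂ :=
  (1 / 8 : ℂ) • !![2, 0, 0, 0; 0, 2, 1, 0; 0, 1, 2, 0; 0, 0, 0, 2]

noncomputable def ρ₁ex : Matrix (Fin 4) (Fin 4) ℂ := (1 / 4 : ℂ) • 1

noncomputable def M₀ex : Matrix (Fin 4) (Fin 4) ℂ :=
  !![1, 0, 0, 0; 0, 0, 1, 0; 0, 1, 0, 0; 0, 0, 0, 1]

noncomputable def M₁ex : Matrix (Fin 4) (Fin 4) ℂ := 1 - M₀ex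

lemma trace_eq_sum_eig {d : ℕ} {A : Matrix (Fin d) (Fin d) ℂ} (hA : A.IsHermitian) :
    A.trace = ∑ i, (hA.eigenvalues i : ℂ) := by
  conv_lhs => rw [hA.spectral_theorem, Unitary.conjStarAlgAut_apply]
  rw [Matrix.trace_mul_comm, ← Matrix.mul_assoc, Unitary.coe_star_mul_self, Matrix.one_mul,
    Matrix.trace_diagonal]
  rfl

lemma trace_sq_eq_sum_eig_sq {d : ℕ} {A : Matrix (Fin d) (Fin d) ℂ} (hA : A.IsHermitian) :
    (A * A).trace = ∑ i, (hA.eigenvalues i : ℂ) ^ 2 := by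
  conv_lhs => rw [hA.spectral_theorem, Unitary.conjStarAlgAut_apply]
  set U : Matrix (Fin d) (Fin d) ℂ := (hA.eigenvectorUnitary : Matrix (Fin d) (Fin d) ℂ) with hU
  set Dg : Matrix (Fin d) (Fin d) ℂ := diagonal (RCLike.ofReal ∘ hA.eigenvalues) with hDg
  have h1 : U * Dg * star U * (U * Dg * star U) = U * (Dg * Dg) * star U := by
    have h2 : star U * U = 1 := Unitary.coe_star_mul_self _
    calc U * Dg * star U * (U * Dg * star U) = U * Dg * (star U * U) * Dg * star U := by
          noncomm_ring
      _ = U * (Dg * Dg) * star U := by rw [h2]; noncomm_ring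
  rw [h1, Matrix.trace_mul_cycle, ← Matrix.mul_assoc, Unitary.coe_star_mul_self, Matrix.one_mul,
    hDg, Matrix.diagonal_mul_diagonal, Matrix.trace_diagonal]
  simp [sq]

lemma eig_root {d : ℕ} {A : Matrix (Fin d) (Fin d) ℂ} (hA : A.IsHermitian) (i : Fin d) :
    (((hA.eigenvalues i : ℂ)) • (1 : Matrix (Fin d) (Fin d) ℂ) - A).det = 0 := by
  have h := hA.eigenvalues_mem_spectrum_real i
  rw [spectrum.mem_iff] at h
  have : ¬ IsUnit ((((hA.eigenvalues i : ℂ)) • (1 : Matrix (Fin d) (Fin d) ℂ) - A)) := by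
    convert h using 2
    rw [Algebra.algebraMap_eq_smul_one]
    norm_num
  rw [Matrix.isUnit_iff_isUnit_det, isUnit_iff_ne_zero, not_not] at this
  exact this

lemma hermM : M₀ex.IsHermitian := by
  rw [Matrix.IsHermitian]
  ext i j
  fin_cases i <;> fin_cases j <;>
    simp [M₀ex, Matrix.conjTranspose_apply, Matrix.vecHead, Matrix.vecTail]

lemma Deq : (1 / 2 : ℝ) • ρ₀ex - (1 / 2 : ℝ) • ρ₁ex =
    !![0,0,0,0; 0,0,1/16,0; 0,1/16,0,0; 0,0,0,0] := by
  ext i j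
  fin_cases i <;> fin_cases j <;>
    simp [ρ₀ex, ρ₁ex, Matrix.one_apply, Matrix.vecHead, Matrix.vecTail] <;> norm_num

lemma hermD : ((1 / 2 : ℝ) • ρ₀ex - (1 / 2 : ℝ) • ρ₁ex).IsHermitian := by
  rw [Deq, Matrix.IsHermitian]
  ext i j
  fin_cases i <;> fin_cases j <;>
    simp [Matrix.conjTranspose_apply, Matrix.vecHead, Matrix.vecTail]

lemma trA2 : (((1 / 2 : ℝ) • ρ₀ex - (1 / 2 : ℝ) • ρ₁ex) *
    ((1 / 2 : ℝ) • ρ₀ex - (1 / 2 : ℝ) • ρ₁ex)).trace = 1 / 128 := by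
  rw [Deq]
  simp [Matrix.trace, Matrix.diag, Matrix.mul_apply, Fin.sum_univ_four]
  norm_num

lemma detD (μ : ℝ) : (((μ:ℂ)) • (1 : Matrix (Fin 4) (Fin 4) ℂ) -
    ((1 / 2 : ℝ) • ρ₀ex - (1 / 2 : ℝ) • ρ₁ex)).det
    = (μ:ℂ)^2 * ((μ:ℂ) - 1/16) * ((μ:ℂ) + 1/16) := by
  rw [Deq]
  rw [show ((μ:ℂ)) • (1 : Matrix (Fin 4) (Fin 4) ℂ) -
      !![0,0,0,0; 0,0,1/16,0; 0,1/16,0,0; 0,0,0,0] =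
      !![(μ:ℂ),0,0,0; 0,(μ:ℂ),-1/16,0; 0,-1/16,(μ:ℂ),0; 0,0,0,(μ:ℂ)] from by
    ext i j; fin_cases i <;> fin_cases j <;>
      simp [Matrix.one_apply, Matrix.vecHead, Matrix.vecTail] <;> norm_num]
  simp [Matrix.det_succ_row_zero, Fin.sum_univ_succ]
  ring

lemma detM (μ : ℝ) : (((μ:ℂ)) • (1 : Matrix (Fin 4) (Fin 4) ℂ) - M₀ex).det
    = ((μ:ℂ) - 1)^3 * ((μ:ℂ) + 1) := by
  rw [show ((μ:ℂ)) • (1 : Matrix (Fin 4) (Fin 4) ℂ) - M₀ex =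
      !![(μ:ℂ)-1,0,0,0; 0,(μ:ℂ),-1,0; 0,-1,(μ:ℂ),0; 0,0,0,(μ:ℂ)-1] from by
    ext i j; fin_cases i <;> fin_cases j <;>
      simp [M₀ex, Matrix.one_apply, Matrix.vecHead, Matrix.vecTail] <;> norm_num]
  simp [Matrix.det_succ_row_zero, Fin.sum_univ_succ]
  ring

lemma trM : M₀ex.trace = 2 := by
  simp [M₀ex, Matrix.trace, Matrix.diag, Fin.sum_univ_four]
  norm_num

lemma reTrcalc : ((ρ₀ex * M₁ex).trace).re = 1/4 ∧ ((ρ₁ex * M₀ex).trace).re = 1/2 := by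
  constructor <;>
  · simp [ρ₀ex, ρ₁ex, M₀ex, M₁ex, Matrix.trace, Matrix.diag, Matrix.mul_apply,
      Fin.sum_univ_four, Matrix.one_apply, Matrix.sub_apply, Matrix.vecHead, Matrix.vecTail]
    norm_num

lemma rootsM : ∀ i, hermM.eigenvalues i = 1 ∨ hermM.eigenvalues i = -1 := by
  intro i
  have h := eig_root hermM i
  rw [detM] at h
  set μ := hermM.eigenvalues i
  have h' : (μ - 1)^3 * (μ + 1) = 0 := by exact_mod_cast h
  rcases mul_eq_zero.mp h' with h'' | h''
  · left; have := pow_eq_zero_iff (n := 3) (by norm_num) |>.mp h''; linarith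
  · right; linarith

lemma sumM : hermM.eigenvalues 0 + hermM.eigenvalues 1 + hermM.eigenvalues 2 +
    hermM.eigenvalues 3 = 2 := by
  have h := trace_eq_sum_eig hermM
  rw [trM, Fin.sum_univ_four] at h
  exact_mod_cast h.symm

lemma eigMaxM : eigMax M₀ex = 1 := by
  rw [eigMax, dif_pos hermM]
  have hex : ∃ i, hermM.eigenvalues i = 1 := by
    by_contra h
    push_neg at h
    have h0 := (rootsM 0).resolve_left (h 0)
    have h1 := (rootsM 1).resolve_left (h 1)
    have h2 := (rootsM 2).resolve_left (h 2)
    have h3 := (rootsM 3).resolve_left (h 3)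
    have := sumM
    rw [h0, h1, h2, h3] at this
    norm_num at this
  obtain ⟨i, hi⟩ := hex
  apply le_antisymm
  · apply ciSup_le
    intro j
    rcases rootsM j with h | h <;> rw [h] <;> norm_num
  · calc (1:ℝ) = hermM.eigenvalues i := hi.symm
      _ ≤ ⨆ j, hermM.eigenvalues j := le_ciSup (Set.finite_range _).bddAbove i

lemma eigMinM : eigMin M₀ex = -1 := by
  rw [eigMin, dif_pos hermM]
  have hex : ∃ i, hermM.eigenvalues i = -1 := by
    by_contra h
    push_neg at h
    have h0 := (rootsM 0).resolve_right (h 0)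
    have h1 := (rootsM 1).resolve_right (h 1)
    have h2 := (rootsM 2).resolve_right (h 2)
    have h3 := (rootsM 3).resolve_right (h 3)
    have := sumM
    rw [h0, h1, h2, h3] at this
    norm_num at this
  obtain ⟨i, hi⟩ := hex
  apply le_antisymm
  · calc ⨅ j, hermM.eigenvalues j ≤ hermM.eigenvalues i :=
        ciInf_le (Set.finite_range _).bddBelow i
      _ = -1 := hi
  · apply le_ciInf
    intro j
    rcases rootsM j with h | h <;> rw [h] <;> norm_num

lemma tnD : traceNorm ((1 / 2 : ℝ) • ρ₀ex - (1 / 2 : ℝ) • ρ₁ex) = 1/8 := by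
  rw [traceNorm, dif_pos hermD]
  have roots : ∀ i, hermD.eigenvalues i = 0 ∨ hermD.eigenvalues i = 1/16 ∨
      hermD.eigenvalues i = -(1/16) := by
    intro i
    have h := eig_root hermD i
    rw [detD] at h
    set μ := hermD.eigenvalues i
    have h' : μ^2 * (μ - 1/16) * (μ + 1/16) = 0 := by
      have h2 : ((μ^2 * (μ - 1/16) * (μ + 1/16) : ℝ) : ℂ) = 0 := by
        push_cast
        convert h using 1
      exact_mod_cast h2
    rcases mul_eq_zero.mp h' with h'' | h''
    · rcases mul_eq_zero.mp h'' with h3 | h3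
      · left; exact pow_eq_zero_iff (n := 2) (by norm_num) |>.mp h3
      · right; left; linarith
    · right; right; linarith
  have hsq : ∑ i, (hermD.eigenvalues i)^2 = 1/128 := by
    have h := trace_sq_eq_sum_eig_sq hermD
    rw [trA2] at h
    have h2 : ((∑ i, (hermD.eigenvalues i)^2 : ℝ) : ℂ) = ((1:ℝ)/128 : ℂ) := by
      push_cast
      rw [← h]
    exact_mod_cast h2
  calc ∑ i, |hermD.eigenvalues i| = ∑ i, 16 * (hermD.eigenvalues i)^2 := by
        refine Finset.sum_congr rfl fun i _ => ?_
        rcases roots i with h | h | h <;> rw [h] <;> norm_num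
    _ = 1/8 := by rw [← Finset.mul_sum, hsq]; norm_num

/-- the explicit example in the separable cone: error `3/8`,
trace-norm distance `1/8`, eigenvalue range `2`; equality holds in the
generalized bound, and the quantum trace-norm bound is violated. -/
theorem stmt16 :
    (1 / 2) * reTr (ρ₀ex * M₁ex) + (1 / 2) * reTr (ρ₁ex * M₀ex) = 3 / 8 ∧
    traceNorm ((1 / 2 : ℝ) • ρ₀ex - (1 / 2 : ℝ) • ρ₁ex) = 1 / 8 ∧
    eigMax M₀ex - eigMin M₀ex = 2 ∧
    (1 / 2) * reTr (ρ₀ex * M₁ex) + (1 / 2) * reTr (ρ₁ex * M₀ex) =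
      1 / 2 - (1 / 2) * traceNorm ((1 / 2 : ℝ) • ρ₀ex - (1 / 2 : ℝ) • ρ₁ex)
        * (eigMax M₀ex - eigMin M₀ex) ∧
    (1 / 2) * reTr (ρ₀ex * M₁ex) + (1 / 2) * reTr (ρ₁ex * M₀ex) <
      1 / 2 - (1 / 2) * traceNorm ((1 / 2 : ℝ) • ρ₀ex - (1 / 2 : ℝ) • ρ₁ex) := by
  obtain ⟨h1, h2⟩ := reTrcalc
  rw [reTr, reTr, h1, h2, tnD, eigMaxM, eigMinM]
  norm_num
end
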